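/- arXiv:2207.02044 — 5 statements merged into one kernel-verified Lean document; each statement's English description precedes it below -/
import Mathlib

section
/- Let Ω ⊂ ℝ² be open and bounded, and p ≥ 1/2. If E_p is a p-Cheeger set of Ω, then E_p is an isoperimetric set in Ω for its own volume, i.e., P(E_p) = inf{ P(F) : F ⊂ Ω, |F| = |E_p| }. -/
open Real Set Metric MeasureTheory Filter

noncomputable section

/-- The Euclidean plane. -/
abbrev Plane := EuclideanSpace ℝ (Fin 2)

/-- Lebesgue measure (area) of a planar set, as a real number. -/
def area (E : Set Plane) : ℝ := (volume E).toReal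

/-- The inradius of a set: the supremum of radii of balls contained in it. -/
def inradius (Ω : Set Plane) : ℝ := sSup {r : ℝ | ∃ x : Plane, ball x r ⊆ Ω}

/-- The `p`-Cheeger ratio `P(E)/|E|^p` of a set, for a given perimeter functional `P`. -/
def cheegerRatio (P : Set Plane → ℝ) (p : ℝ) (E : Set Plane) : ℝ := P E / (area E) ^ p

/-- The `p`-Cheeger constant `H(p)` of `Ω`. -/
def cheegerConst (P : Set Plane → ℝ) (p : ℝ) (Ω : Set Plane) : ℝ :=
  sInf {c : ℝ | ∃ F, F ⊆ Ω ∧ 0 < area F ∧ c = cheegerRatio P p F}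

/-- `E` is a `p`-Cheeger set of `Ω`: it is admissible and minimizes the `p`-Cheeger ratio. -/
def IsCheegerSet (P : Set Plane → ℝ) (p : ℝ) (Ω E : Set Plane) : Prop :=
  E ⊆ Ω ∧ 0 < area E ∧
    ∀ F, F ⊆ Ω → 0 < area F → cheegerRatio P p E ≤ cheegerRatio P p F

/-- `E` is an isoperimetric set in `Ω` for its own volume. -/
def IsIsoperimetric (P : Set Plane → ℝ) (Ω E : Set Plane) : Prop :=
  E ⊆ Ω ∧ ∀ F, F ⊆ Ω → area F = area E → P E ≤ P F

/-- The prescribed-curvature infimum `F(κ)` of `Ω`. -/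
def prescribedCurv (P : Set Plane → ℝ) (Ω : Set Plane) (κ : ℝ) : ℝ :=
  sInf {c : ℝ | ∃ A, A ⊆ Ω ∧ π * (inradius Ω) ^ 2 ≤ area A ∧ c = P A - κ * area A}

/-- `Ω` has no necks of any radius. -/
def NoNecksOfAnyRadius (Ω : Set Plane) : Prop :=
  ∀ r : ℝ, 0 < r → r ≤ inradius Ω → ∀ x₀ x₁ : Plane, ball x₀ r ⊆ Ω → ball x₁ r ⊆ Ω →
    ∃ γ : ℝ → Plane, Continuous γ ∧ γ 0 = x₀ ∧ γ 1 = x₁ ∧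
      ∀ t ∈ Icc (0:ℝ) 1, ball (γ t) r ⊆ Ω

/-- For open bounded `Ω ⊂ ℝ²` and `p ≥ 1/2`, any `p`-Cheeger set `E_p` of `Ω`
is an isoperimetric set in `Ω` for its own volume:
`P(E_p) = inf { P(F) : F ⊆ Ω, |F| = |E_p| }`. -/
theorem stmt_4 (P : Set Plane → ℝ) (Ω : Set Plane) (hΩopen : IsOpen Ω)
    (hΩbdd : Bornology.IsBounded Ω) (p : ℝ) (hp : (1:ℝ)/2 ≤ p)
    (Ep : Set Plane) (hEp : IsCheegerSet P p Ω Ep) :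
    P Ep = sInf {c : ℝ | ∃ F, F ⊆ Ω ∧ area F = area Ep ∧ c = P F} := by
  obtain ⟨hsub, hpos, hmin⟩ := hEp
  have key : ∀ c ∈ {c : ℝ | ∃ F, F ⊆ Ω ∧ area F = area Ep ∧ c = P F}, P Ep ≤ c := by
    rintro c ⟨F, hF, haF, rfl⟩
    have h := hmin F hF (haF ▸ hpos)
    have hap : (0:ℝ) < (area Ep) ^ p := Real.rpow_pos_of_pos hpos p
    simpa [cheegerRatio, haF, div_le_div_iff_of_pos_right hap] using h
  refine le_antisymm (le_csInf ⟨P Ep, Ep, hsub, rfl, rfl⟩ key) (csInf_le ⟨P Ep, key⟩ ⟨Ep, hsub, rfl, rfl⟩)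
end
end

section
/- Let Ω ⊂ ℝ² be open and bounded with inradius R, let 1/2 < p < 1, and let E_p be a p-Cheeger set. Assume E_p minimizes the prescribed-curvature functional A ↦ P(A) − κ_{E_p}|A| over subsets A ⊂ Ω with |A| ≥ π R², where κ_{E_p} = p·H(p)·|E_p|^{p−1}. Then F(κ_{E_p}) > 0, and consequently κ_{E_p} < H(1). -/
open Real Set Metric MeasureTheory Filter

noncomputable section

/-! At the critical curvature `κ = p H(p) |E_p|^(p-1)` the energy of `E_p` is
`P(E_p) - κ|E_p| = (1 - p) H(p) |E_p|^p`, which is positive because `p < 1`. Since `E_p` realises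
`F(κ)`, this gives `F(κ) > 0 = F(H(1))`, and strict monotonicity of `F` turns this into
`κ < H(1)`. -/

lemma perimeter_eq_of_cheegerRatio_eq {P : Set Plane → ℝ} {p c : ℝ} {E : Set Plane}
    (hE : 0 < area E) (hc : cheegerRatio P p E = c) : P E = c * area E ^ p := by
  rw [← hc, cheegerRatio, div_mul_cancel₀ _ (rpow_pos_of_pos hE p).ne']

lemma perimeter_sub_criticalCurv_mul_area {P : Set Plane → ℝ} {p c : ℝ} {E : Set Plane}
    (hE : 0 < area E) (hc : cheegerRatio P p E = c) :
    P E - p * c * area E ^ (p - 1) * area E = (1 - p) * c * area E ^ p := by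
  rw [perimeter_eq_of_cheegerRatio_eq hE hc, rpow_sub_one hE.ne']
  field_simp

lemma lt_of_strictAntiOn_of_apply_eq_zero {f : ℝ → ℝ} (hf : StrictAntiOn f (Ioi 0)) {x y : ℝ}
    (hx : 0 < x) (hy : 0 < y) (hfy : f y = 0) (hfx : 0 < f x) : x < y :=
  (hf.lt_iff_gt hy hx).1 (hfy ▸ hfx)

theorem stmt_6_general (P : Set Plane → ℝ) (Ω : Set Plane) (p : ℝ) (hp : (1:ℝ)/2 < p) (hp1 : p < 1)
    (Ep : Set Plane) (hEp : IsCheegerSet P p Ω Ep)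
    (hH : cheegerRatio P p Ep = cheegerConst P p Ω)
    (κ : ℝ) (hκ : κ = p * cheegerConst P p Ω * (area Ep) ^ (p - 1)) (hκpos : 0 < κ)
    -- `E_p` minimizes the prescribed-curvature functional at level `κ`
    (hmin : prescribedCurv P Ω κ = P Ep - κ * area Ep)
    -- `F` is strictly decreasing and vanishes exactly at `H(1) > 0`
    (hFanti : StrictAntiOn (prescribedCurv P Ω) (Ioi 0))
    (hH1pos : 0 < cheegerConst P 1 Ω)
    (hFzero : prescribedCurv P Ω (cheegerConst P 1 Ω) = 0) :
    0 < prescribedCurv P Ω κ ∧ κ < cheegerConst P 1 Ω := by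
  obtain ⟨-, hEpos, -⟩ := hEp
  have hFκ : prescribedCurv P Ω κ = (1 - p) * cheegerConst P p Ω * area Ep ^ p := by
    rw [hmin, hκ, perimeter_sub_criticalCurv_mul_area hEpos hH]
  have hHpos : 0 < cheegerConst P p Ω := by
    rw [hκ] at hκpos
    exact pos_of_mul_pos_right (pos_of_mul_pos_left hκpos (rpow_pos_of_pos hEpos _).le)
      (by linarith)
  have hFpos : 0 < prescribedCurv P Ω κ := by
    rw [hFκ]
    have := rpow_pos_of_pos hEpos p
    have : 0 < 1 - p := by linarith
    positivity
  exact ⟨hFpos, lt_of_strictAntiOn_of_apply_eq_zero hFanti hκpos hH1pos hFzero hFpos⟩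

/-- Open bounded `Ω ⊂ ℝ²` with inradius `R`, `1/2 < p < 1`, `E_p` a `p`-Cheeger
set minimizing the prescribed-curvature functional `A ↦ P(A) − κ|A|` with
`κ = p·H(p)·|E_p|^(p−1) > 0`; given that `F` is strictly decreasing on `(0,∞)` and
`F(H(1)) = 0` with `H(1) > 0`, one concludes `F(κ) > 0` and hence `κ < H(1)`. -/
theorem stmt_6 (P : Set Plane → ℝ) (Ω : Set Plane) (hΩopen : IsOpen Ω)
    (hΩbdd : Bornology.IsBounded Ω) (p : ℝ) (hp : (1:ℝ)/2 < p) (hp1 : p < 1)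
    (Ep : Set Plane) (hEp : IsCheegerSet P p Ω Ep)
    (hH : cheegerRatio P p Ep = cheegerConst P p Ω)
    (κ : ℝ) (hκ : κ = p * cheegerConst P p Ω * (area Ep) ^ (p - 1)) (hκpos : 0 < κ)
    -- `E_p` minimizes the prescribed-curvature functional at level `κ`
    (hmin : prescribedCurv P Ω κ = P Ep - κ * area Ep)
    -- `F` is strictly decreasing and vanishes exactly at `H(1) > 0`
    (hFanti : StrictAntiOn (prescribedCurv P Ω) (Ioi 0))
    (hH1pos : 0 < cheegerConst P 1 Ω)
    (hFzero : prescribedCurv P Ω (cheegerConst P 1 Ω) = 0) :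
    0 < prescribedCurv P Ω κ ∧ κ < cheegerConst P 1 Ω :=
  stmt_6_general P Ω p hp hp1 Ep hEp hH κ hκ hκpos hmin hFanti hH1pos hFzero

end
end

section
/- Let Ω ⊂ ℝ² be a set with no necks of any radius, let 1/2 < p < 1, and let E¹_p, E²_p be two p-Cheeger sets of Ω with free-boundary curvatures κ_i := p·H(p)·|E^i_p|^{p−1}. Assume the isoperimetric-curvature correspondence: any two isoperimetric sets in Ω of volumes V₂ > V₁ ≥ π R² have free-boundary curvatures satisfying κ(V₂) ≥ κ(V₁). Then |E¹_p| = |E²_p|; i.e., all p-Cheeger sets for a fixed p ∈ (1/2, 1) have the same volume. -/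
open Real Set Metric MeasureTheory Filter

noncomputable section

/-- `Ω ⊂ ℝ²` with no necks of any radius, `1/2 < p < 1`, and two `p`-Cheeger
sets `E¹_p, E²_p` with free-boundary curvatures `κ_i = p·H(p)·|E^i_p|^(p−1)`. Under the
monotone isoperimetric-curvature correspondence, the two volumes coincide: all `p`-Cheeger
sets for a fixed `p ∈ (1/2, 1)` have the same volume. -/
theorem stmt_9 (P : Set Plane → ℝ) (Ω : Set Plane) (hΩopen : IsOpen Ω)
    (hΩbdd : Bornology.IsBounded Ω) (hΩnn : NoNecksOfAnyRadius Ω)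
    (p : ℝ) (hp : (1:ℝ)/2 < p) (hp1 : p < 1)
    (hHpos : 0 < cheegerConst P p Ω)
    (curv : Set Plane → ℝ)
    -- the monotone isoperimetric-curvature correspondence
    (hcorr : ∀ F₁ F₂ : Set Plane, IsIsoperimetric P Ω F₁ → IsIsoperimetric P Ω F₂ →
      π * (inradius Ω) ^ 2 ≤ area F₁ → area F₁ < area F₂ → curv F₁ ≤ curv F₂)
    (E₁ E₂ : Set Plane)
    (hE₁ : IsCheegerSet P p Ω E₁) (hE₂ : IsCheegerSet P p Ω E₂)
    -- `p`-Cheeger sets are isoperimetric for their own volume, of volume `≥ πR²`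
    (hI₁ : IsIsoperimetric P Ω E₁) (hI₂ : IsIsoperimetric P Ω E₂)
    (hv₁ : π * (inradius Ω) ^ 2 ≤ area E₁) (hv₂ : π * (inradius Ω) ^ 2 ≤ area E₂)
    -- the free-boundary curvature identity
    (hκ₁ : curv E₁ = p * cheegerConst P p Ω * (area E₁) ^ (p - 1))
    (hκ₂ : curv E₂ = p * cheegerConst P p Ω * (area E₂) ^ (p - 1)) :
    area E₁ = area E₂ := by
  have key : ∀ a b : ℝ, 0 < a → a < b →
      p * cheegerConst P p Ω * b ^ (p - 1) < p * cheegerConst P p Ω * a ^ (p - 1) := by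
    intro a b ha hab
    have hpH : 0 < p * cheegerConst P p Ω := by positivity
    exact mul_lt_mul_of_pos_left (Real.rpow_lt_rpow_of_neg ha hab (by linarith)) hpH
  rcases lt_trichotomy (area E₁) (area E₂) with h | h | h
  · have h1 := hcorr E₁ E₂ hI₁ hI₂ hv₁ h
    have h2 := key _ _ hE₁.2.1 h
    rw [hκ₁, hκ₂] at h1; linarith
  · exact h
  · have h1 := hcorr E₂ E₁ hI₂ hI₁ hv₂ h
    have h2 := key _ _ hE₂.2.1 h
    rw [hκ₁, hκ₂] at h1; linarith
end
end

section
/- Let Ω be a simply connected, open, bounded set in ℝ² with inradius R, and let κ > 1/R. Suppose a ball B ⊆ Ω minimizes F(κ) := inf{ P(A) − κ|A| : A ⊂ Ω, |A| ≥ π R² } and that the free boundary ∂B ∩ Ω, if nonempty, must have constant curvature κ. Then B = Ω; i.e., Ω itself is a ball. -/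
open Real Set Metric MeasureTheory Filter

noncomputable section

theorem IsPreconnected.subset_of_disjoint_frontier {α : Type*} [TopologicalSpace α]
    {s u : Set α} (hs : IsPreconnected s) (hu : IsOpen u) (h'u : (s ∩ u).Nonempty)
    (h : Disjoint (frontier u) s) : s ⊆ u :=
  hs.subset_of_closure_inter_subset hu h'u fun y ⟨hyc, hys⟩ => by
    by_contra hyu
    exact h.notMem_of_mem_left (hu.frontier_eq ▸ ⟨hyc, hyu⟩) hys

theorem le_of_pi_mul_sq_le_pi_mul_sq {R r : ℝ} (hr : 0 ≤ r) (h : π * R ^ 2 ≤ π * r ^ 2) :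
    R ≤ r :=
  (le_abs_self R).trans (abs_le_of_sq_le_sq ((mul_le_mul_iff_right₀ pi_pos).mp h) hr)

theorem stmt_13_general (Ω : Set Plane) (hΩsc : SimplyConnectedSpace Ω)
    (hRpos : 0 < inradius Ω) (κ : ℝ) (hκ : 1 / inradius Ω < κ)
    (x : Plane) (r : ℝ) (hr : 0 < r) (B : Set Plane) (hB : B = ball x r) (hBΩ : B ⊆ Ω)
    -- the area of the ball
    (hAball : area B = π * r ^ 2)
    (hadm : π * (inradius Ω) ^ 2 ≤ area B)
    -- the free boundary, if nonempty, has constant curvature `κ`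
    (hfb : (frontier B ∩ Ω).Nonempty → 1 / r = κ) :
    B = Ω := by
  have hRr : inradius Ω ≤ r := le_of_pi_mul_sq_le_pi_mul_sq hr.le (hAball ▸ hadm)
  have hcurv : 1 / r < κ := (one_div_le_one_div_of_le hRpos hRr).trans_lt hκ
  have hfree : Disjoint (frontier B) Ω := by
    by_contra hmeet
    exact hcurv.ne (hfb (not_disjoint_iff_nonempty_inter.mp hmeet))
  have hΩ : IsPreconnected Ω := isPreconnected_iff_preconnectedSpace.mpr inferInstance
  subst hB
  have hx : x ∈ ball x r := mem_ball_self hr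
  exact hBΩ.antisymm (hΩ.subset_of_disjoint_frontier isOpen_ball ⟨x, hBΩ hx, hx⟩ hfree)

/-- Let `Ω ⊂ ℝ²` be simply connected, open, bounded, with inradius `R`, and
`κ > 1/R`. If a ball `B ⊆ Ω` minimizes `F(κ)` and its free boundary `∂B ∩ Ω`, if nonempty,
has constant curvature `κ` (the curvature of `∂B` being `1/r`), then `B = Ω`. -/
theorem stmt_13 (P : Set Plane → ℝ) (Ω : Set Plane) (hΩopen : IsOpen Ω)
    (hΩbdd : Bornology.IsBounded Ω) (hΩsc : SimplyConnectedSpace Ω)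
    (hRpos : 0 < inradius Ω) (κ : ℝ) (hκ : 1 / inradius Ω < κ)
    (x : Plane) (r : ℝ) (hr : 0 < r) (B : Set Plane) (hB : B = ball x r) (hBΩ : B ⊆ Ω)
    -- the area of the ball
    (hAball : area B = π * r ^ 2)
    -- `B` minimizes `F(κ)`
    (hadm : π * (inradius Ω) ^ 2 ≤ area B)
    (hmin : ∀ A : Set Plane, A ⊆ Ω → π * (inradius Ω) ^ 2 ≤ area A →
      P B - κ * area B ≤ P A - κ * area A)
    -- the free boundary, if nonempty, has constant curvature `κ`
    (hfb : (frontier B ∩ Ω).Nonempty → 1 / r = κ) :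
    B = Ω :=
  stmt_13_general Ω hΩsc hRpos κ hκ x r hr B hB hBΩ hAball hadm hfb

end
end

section
/- Let Ω ⊂ ℝ² be open and bounded, let p_j → p with p_j ≥ 1/2, and let E_j be minimizers of R_{p_j}[E] = P(E)/|E|^{p_j} over subsets of Ω of positive measure. If E_j → E in L¹_loc, then E is a minimizer of R_p, i.e., a p-Cheeger set of Ω. -/
open Real Set Metric MeasureTheory Filter

noncomputable section

/-- Open bounded `Ω ⊂ ℝ²`, `p_j → p` with `p_j ≥ 1/2`, `E_j` minimizers of
`R_{p_j}[E] = P(E)/|E|^{p_j}` over subsets of `Ω` of positive measure (i.e. `p_j`-Cheeger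
sets). If `E_j → E` in `L¹` (measure of symmetric differences tending to `0`), with `E ⊆ Ω`
of positive measure, and the perimeter is lower semicontinuous along the sequence, then `E`
is a minimizer of `R_p`, i.e. a `p`-Cheeger set of `Ω`. -/
theorem stmt_16 (P : Set Plane → ℝ) (Ω : Set Plane) (hΩopen : IsOpen Ω)
    (hΩbdd : Bornology.IsBounded Ω)
    (p : ℝ) (hp : (1:ℝ)/2 ≤ p) (pj : ℕ → ℝ) (hpj : ∀ j, (1:ℝ)/2 ≤ pj j)
    (hpconv : Tendsto pj atTop (nhds p))
    (E : ℕ → Set Plane) (hE : ∀ j, IsCheegerSet P (pj j) Ω (E j))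
    (Elim : Set Plane) (hElimΩ : Elim ⊆ Ω) (hElimvol : 0 < area Elim)
    (hconv : Tendsto (fun j => area (symmDiff (E j) Elim)) atTop (nhds 0))
    -- lower semicontinuity of the perimeter under `L¹` convergence of sets
    (hlsc : ∀ (F : ℕ → Set Plane) (G : Set Plane), (∀ j, F j ⊆ Ω) → G ⊆ Ω →
      Tendsto (fun j => area (symmDiff (F j) G)) atTop (nhds 0) →
      P G ≤ liminf (fun j => P (F j)) atTop) :
    IsCheegerSet P p Ω Elim := by
  have hΩfin : volume Ω < ⊤ := hΩbdd.measure_lt_top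
  have hfin : ∀ A : Set Plane, A ⊆ Ω → volume A ≠ ⊤ := fun A hA =>
    (lt_of_le_of_lt (measure_mono hA) hΩfin).ne
  -- area of a subset of Ω changes by at most the area of the symmetric difference
  have key : ∀ A B : Set Plane, A ⊆ Ω → B ⊆ Ω → area A ≤ area B + area (symmDiff A B) := by
    intro A B hA hB
    have hsub : A ⊆ B ∪ (symmDiff A B) := by
      intro x hx
      by_cases hxB : x ∈ B
      · exact Or.inl hxB
      · exact Or.inr (Or.inl ⟨hx, hxB⟩)
    have h1 : volume A ≤ volume B + volume (symmDiff A B) :=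
      le_trans (measure_mono hsub) (measure_union_le _ _)
    have hΔ : volume (symmDiff A B) ≠ ⊤ := by
      refine hfin _ ?_
      intro x hx
      rcases hx with ⟨hx, _⟩ | ⟨hx, _⟩
      · exact hA hx
      · exact hB hx
    have := ENNReal.toReal_mono (by simp [ENNReal.add_ne_top, hfin B hB, hΔ]) h1
    rwa [ENNReal.toReal_add (hfin B hB) hΔ] at this
  -- convergence of areas
  have hareaconv : Tendsto (fun j => area (E j)) atTop (nhds (area Elim)) := by
    have h0 : Tendsto (fun j => area (E j) - area Elim) atTop (nhds 0) := by
      refine squeeze_zero_norm (fun j => ?_) hconv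
      rw [Real.norm_eq_abs, abs_sub_le_iff]
      constructor
      · have := key (E j) Elim (hE j).1 hElimΩ
        linarith
      · have := key Elim (E j) hElimΩ (hE j).1
        rw [symmDiff_comm] at this
        linarith
    have := h0.add_const (area Elim)
    simpa using this
  have haElim : (0:ℝ) < (area Elim) ^ p := Real.rpow_pos_of_pos hElimvol p
  refine ⟨hElimΩ, hElimvol, ?_⟩
  intro F hFΩ hFvol
  have hfF : (0:ℝ) < (area F) ^ p := Real.rpow_pos_of_pos hFvol p
  -- the comparison sequence
  set v : ℕ → ℝ := fun j => P F / (area F) ^ (pj j) * (area (E j)) ^ (pj j) with hv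
  have hvlim : Tendsto v atTop (nhds (P F / (area F) ^ p * (area Elim) ^ p)) := by
    apply Tendsto.mul
    · exact (tendsto_const_nhds (x := P F)).div
        ((tendsto_const_nhds (x := area F)).rpow hpconv (Or.inl hFvol.ne')) hfF.ne'
    · exact hareaconv.rpow hpconv (Or.inl hElimvol.ne')
  have hle : ∀ j, P (E j) ≤ v j := by
    intro j
    have hmin := (hE j).2.2 F hFΩ hFvol
    have haj : (0:ℝ) < (area (E j)) ^ (pj j) := Real.rpow_pos_of_pos (hE j).2.1 (pj j)
    rw [cheegerRatio, cheegerRatio, div_le_div_iff₀ haj (Real.rpow_pos_of_pos hFvol (pj j))]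
      at hmin
    show P (E j) ≤ P F / area F ^ pj j * area (E j) ^ pj j
    rw [div_mul_eq_mul_div, le_div_iff₀ (Real.rpow_pos_of_pos hFvol (pj j))]
    linarith [hmin]
  -- lower semicontinuity + liminf comparison
  have hP : P Elim ≤ liminf (fun j => P (E j)) atTop :=
    hlsc E Elim (fun j => (hE j).1) hElimΩ hconv
  have hΩvolpos : 0 < area Ω := lt_of_lt_of_le hElimvol
    (ENNReal.toReal_mono hΩfin.ne (measure_mono hElimΩ))
  have hlow : IsBoundedUnder (· ≥ ·) atTop (fun j => P (E j)) := by
    set c : ℝ := P (E 0) / (area (E 0)) ^ (pj 0) with hc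
    set M : ℝ := (area Ω) ^ (pj 0) with hM
    have hMpos : 0 < M := Real.rpow_pos_of_pos hΩvolpos _
    refine isBoundedUnder_of ⟨min c 0 * M, fun k => ?_⟩
    have hak : 0 < area (E k) := (hE k).2.1
    have hakM : (area (E k)) ^ (pj 0) ≤ M :=
      Real.rpow_le_rpow hak.le (ENNReal.toReal_mono hΩfin.ne (measure_mono (hE k).1))
        (le_trans (by norm_num) (hpj 0))
    have hmin := (hE 0).2.2 (E k) (hE k).1 hak
    rw [cheegerRatio, cheegerRatio, ← hc,
      le_div_iff₀ (Real.rpow_pos_of_pos hak (pj 0))] at hmin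
    have hxpos : 0 < (area (E k)) ^ (pj 0) := Real.rpow_pos_of_pos hak _
    rcases le_or_gt 0 c with hc0 | hc0
    · have : 0 ≤ c * (area (E k)) ^ (pj 0) := mul_nonneg hc0 hxpos.le
      have hminM : min c 0 * M ≤ 0 := mul_nonpos_of_nonpos_of_nonneg (min_le_right c 0) hMpos.le
      exact le_trans (le_trans hminM this) hmin
    · have h1 : c * M ≤ c * (area (E k)) ^ (pj 0) :=
        mul_le_mul_of_nonpos_left hakM hc0.le
      have : min c 0 * M = c * M := by rw [min_eq_left hc0.le]
      exact le_trans (le_trans this.le h1) hmin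
  have hvcob : IsCoboundedUnder (· ≥ ·) atTop v := hvlim.isBoundedUnder_le.isCobounded_ge
  have hliminf : liminf (fun j => P (E j)) atTop ≤ liminf v atTop :=
    liminf_le_liminf (Eventually.of_forall hle) hlow hvcob
  have hvliminf : liminf v atTop = P F / (area F) ^ p * (area Elim) ^ p := hvlim.liminf_eq
  have hfinal : P Elim ≤ P F / (area F) ^ p * (area Elim) ^ p := by
    calc P Elim ≤ liminf (fun j => P (E j)) atTop := hP
    _ ≤ liminf v atTop := hliminf
    _ = _ := hvliminf
  rw [cheegerRatio, cheegerRatio, div_le_iff₀ haElim]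
  exact hfinal
end
end
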